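/- arXiv:2501.17440 — 4 statements merged into one kernel-verified Lean document; each statement's English description precedes it below -/
import Mathlib

section
/- Let d ≥ 1 be an integer and β, κ > 0, and set η₁ := (2^{-(12+7β)/(2+β)}·β·√κ)^{1/(2+β)}. There exists a constant C ≥ 1 such that for all t ∈ (0,1] and all x, y ∈ ℝ^d \ {0} with |y| ≥ |x| ≥ η₁·t^{1/(2+β)}: t/(min(|x|,1))^{2+2β} ≤ C·|x-y|²/t + 2t/|y|^{2+2β} + 1. -/
/-!
If `|x| ≥ 1` the left side is `t ≤ 1`. Otherwise either `|y|^{2+2β} ≤ 2|x|^{2+2β}`, and the left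
side is at most `2t/|y|^{2+2β}`, or `|y| ≥ 2^{1/(2+2β)}|x|`, so that `|x - y| ≳ |x|`; in the latter
case the lower bound `|x| ≥ η₁ t^{1/(2+β)}` gives `t² ≲ |x|^{4+2β}`, i.e. `t/|x|^{2+2β} ≲ |x|²/t`.
-/

noncomputable section

/-- `η₁ = η₁(β,κ) := (2^{-(12+7β)/(2+β)} · β · √κ)^{1/(2+β)}`. -/
def eta1 (β κ : ℝ) : ℝ :=
  ((2 : ℝ) ^ (-(12 + 7 * β) / (2 + β)) * β * Real.sqrt κ) ^ (1 / (2 + β))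

open Real

lemma eta1_pos {β κ : ℝ} (hβ : 0 < β) (hκ : 0 < κ) : 0 < eta1 β κ := by
  unfold eta1
  positivity

lemma rpow_mul_le_rpow_of_mul_rpow_one_div_le {η t r q : ℝ} (hη : 0 ≤ η) (ht : 0 ≤ t)
    (hq : 0 < q) (h : η * t ^ (1 / q) ≤ r) : η ^ q * t ≤ r ^ q :=
  calc η ^ q * t = (η * t ^ (1 / q)) ^ q := by
        rw [mul_rpow hη (by positivity), ← rpow_mul ht, one_div_mul_cancel hq.ne', rpow_one]
    _ ≤ r ^ q := rpow_le_rpow (by positivity) h hq.le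

lemma div_rpow_le_sq_div_of_mul_rpow_one_div_le {η t r q : ℝ} (hη : 0 < η) (ht : 0 < t)
    (hr : 0 < r) (hq : 0 < q) (h : η * t ^ (1 / q) ≤ r) :
    t / r ^ (2 * q - 2) ≤ r ^ 2 / ((η ^ q) ^ 2 * t) := by
  have hηt := rpow_mul_le_rpow_of_mul_rpow_one_div_le hη.le ht.le hq h
  have hηq : 0 < η ^ q := rpow_pos_of_pos hη q
  rw [rpow_sub hr, mul_comm 2 q, rpow_mul hr.le, rpow_two, rpow_two,
    div_div_eq_mul_div, div_le_div_iff₀ (by positivity) (by positivity)]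
  nlinarith [mul_pos hηq ht, mul_le_mul hηt hηt (by positivity) (by positivity)]

lemma two_rpow_inv_mul_le_of_two_mul_rpow_le {a b p : ℝ} (ha : 0 ≤ a) (hb : 0 ≤ b)
    (hp : 0 < p) (h : 2 * a ^ p ≤ b ^ p) : 2 ^ p⁻¹ * a ≤ b := by
  rwa [← rpow_le_rpow_iff (by positivity) hb hp, mul_rpow (by positivity) ha,
    ← rpow_mul zero_le_two, inv_mul_cancel₀ hp.ne', rpow_one]

theorem stmt7_general (d : ℕ) (β κ : ℝ) (hβ : 0 < β) (hκ : 0 < κ) :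
    ∃ C : ℝ, 1 ≤ C ∧ ∀ t : ℝ, t ∈ Set.Ioc (0 : ℝ) 1 →
      ∀ x y : EuclideanSpace ℝ (Fin d), x ≠ 0 → y ≠ 0 →
        eta1 β κ * t ^ (1 / (2 + β)) ≤ ‖x‖ → ‖x‖ ≤ ‖y‖ →
          t / (min ‖x‖ 1) ^ (2 + 2 * β) ≤
            C * ‖x - y‖ ^ 2 / t + 2 * t / ‖y‖ ^ (2 + 2 * β) + 1 := by
  set p := 2 + 2 * β
  set c : ℝ := 2 ^ p⁻¹
  set K := (c - 1) ^ 2 * (eta1 β κ ^ (2 + β)) ^ 2 with hK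
  have hc : 1 < c := one_lt_rpow one_lt_two (by positivity)
  have hη := eta1_pos hβ hκ
  refine ⟨max 1 K⁻¹, le_max_left _ _, ?_⟩
  rintro t ⟨ht, ht1⟩ x y hx0 hy0 hxt -
  have hx := norm_pos_iff.2 hx0
  have hy := norm_pos_iff.2 hy0
  rcases le_or_gt 1 ‖x‖ with hx1 | hx1
  · rw [min_eq_right hx1, one_rpow, div_one]
    have : 0 ≤ max 1 K⁻¹ * ‖x - y‖ ^ 2 / t := by positivity
    linarith [show 0 ≤ 2 * t / ‖y‖ ^ p by positivity]
  rw [min_eq_left hx1.le]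
  rcases le_or_gt (‖y‖ ^ p) (2 * ‖x‖ ^ p) with hyx | hyx
  · have : t / ‖x‖ ^ p ≤ 2 * t / ‖y‖ ^ p := by
      rw [← mul_div_mul_left t _ two_ne_zero]
      exact div_le_div_of_nonneg_left (by positivity) (by positivity) hyx
    linarith [show 0 ≤ max 1 K⁻¹ * ‖x - y‖ ^ 2 / t by positivity]
  have hcx : (c - 1) * ‖x‖ ≤ ‖x - y‖ := by
    have := two_rpow_inv_mul_le_of_two_mul_rpow_le hx.le hy.le (by positivity) hyx.le
    linarith [norm_sub_norm_le y x, norm_sub_rev x y]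
  have key : t / ‖x‖ ^ p ≤ max 1 K⁻¹ * ‖x - y‖ ^ 2 / t :=
    calc t / ‖x‖ ^ p = t / ‖x‖ ^ (2 * (2 + β) - 2) := by rw [show 2 * (2 + β) - 2 = p by ring]
      _ ≤ ‖x‖ ^ 2 / ((eta1 β κ ^ (2 + β)) ^ 2 * t) :=
        div_rpow_le_sq_div_of_mul_rpow_one_div_le hη ht hx (by positivity) hxt
      _ = K⁻¹ * ((c - 1) * ‖x‖) ^ 2 / t := by
        rw [hK]
        field_simp [hη.ne', (sub_pos.2 hc).ne']
      _ ≤ max 1 K⁻¹ * ‖x - y‖ ^ 2 / t := by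
        gcongr
        exact le_max_right _ _
  linarith [show 0 ≤ 2 * t / ‖y‖ ^ p by positivity]

theorem stmt7 (d : ℕ) (hd : 1 ≤ d) (β κ : ℝ) (hβ : 0 < β) (hκ : 0 < κ) :
    ∃ C : ℝ, 1 ≤ C ∧ ∀ t : ℝ, t ∈ Set.Ioc (0 : ℝ) 1 →
      ∀ x y : EuclideanSpace ℝ (Fin d), x ≠ 0 → y ≠ 0 →
        eta1 β κ * t ^ (1 / (2 + β)) ≤ ‖x‖ → ‖x‖ ≤ ‖y‖ →
          t / (min ‖x‖ 1) ^ (2 + 2 * β) ≤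
            C * ‖x - y‖ ^ 2 / t + 2 * t / ‖y‖ ^ (2 + 2 * β) + 1 :=
  stmt7_general d β κ hβ hκ

end
end

section
/- For any a > 0 there exists a constant C = C(a) > 0 such that for all r, R > 0: ∫₀^r t^{-a/2}·e^{-R/t} dt ≤ C·r·e^{-R/(2r)}/(R/2)^{a/2}. -/
open MeasureTheory

noncomputable section

/-! Split `exp (-R/t) = exp (-R/(2t))²`. One factor is at most `exp (-R/(2r))` since `t ≤ r`; the
other, multiplied by `t^(-b)` with `b = a/2`, equals `(R/2)^(-b) u^b e^(-u)` for `u = R/(2t)`, and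
`u^b e^(-u)` is maximal at `u = b`. The integrand is thus bounded on `(0, r]` by
`b^b e^(-b) e^(-R/(2r)) / (R/2)^b`, and integrating over an interval of length `r` gives the
claim. -/

theorem Real.rpow_mul_exp_neg_le {b u : ℝ} (hb : 0 < b) (hu : 0 ≤ u) :
    u ^ b * Real.exp (-u) ≤ b ^ b * Real.exp (-b) := by
  have hlin : u / b ≤ Real.exp (u / b - 1) := by linarith [Real.add_one_le_exp (u / b - 1)]
  have hpow : (u / b) ^ b ≤ Real.exp (u - b) := by
    calc (u / b) ^ b ≤ Real.exp (u / b - 1) ^ b := by gcongr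
      _ = Real.exp (u - b) := by rw [← Real.exp_mul]; congr 1; field_simp
  rw [Real.div_rpow hu hb.le, div_le_iff₀ (by positivity)] at hpow
  calc u ^ b * Real.exp (-u) ≤ Real.exp (u - b) * b ^ b * Real.exp (-u) := by gcongr
    _ = b ^ b * Real.exp (-b) := by rw [mul_right_comm, ← Real.exp_add]; ring_nf

theorem Real.rpow_neg_mul_exp_neg_div_le {b R t r : ℝ} (hb : 0 < b) (hR : 0 < R) (ht : 0 < t)
    (htr : t ≤ r) :
    t ^ (-b) * Real.exp (-R / t) ≤
      b ^ b * Real.exp (-b) * Real.exp (-R / (2 * r)) / (R / 2) ^ b := by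
  have hsplit : Real.exp (-R / t) = Real.exp (-(R / (2 * t))) * Real.exp (-(R / (2 * t))) := by
    rw [← Real.exp_add]; congr 1; field_simp; ring
  have hfar : Real.exp (-(R / (2 * t))) ≤ Real.exp (-R / (2 * r)) := by
    rw [neg_div, Real.exp_le_exp, neg_le_neg_iff]; gcongr
  have hnear : (R / 2) ^ b * (t ^ (-b) * Real.exp (-(R / (2 * t)))) ≤ b ^ b * Real.exp (-b) := by
    have hu : (R / (2 * t)) ^ b = (R / 2) ^ b * t ^ (-b) := by
      rw [← div_div, Real.div_rpow (by positivity) ht.le, Real.rpow_neg ht.le, div_eq_mul_inv]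
    rw [← mul_assoc, ← hu]
    exact Real.rpow_mul_exp_neg_le hb (by positivity)
  rw [le_div_iff₀ (by positivity), hsplit]
  calc t ^ (-b) * (Real.exp (-(R / (2 * t))) * Real.exp (-(R / (2 * t)))) * (R / 2) ^ b
      = (R / 2) ^ b * (t ^ (-b) * Real.exp (-(R / (2 * t)))) * Real.exp (-(R / (2 * t))) := by
        ring
    _ ≤ b ^ b * Real.exp (-b) * Real.exp (-R / (2 * r)) := by gcongr

theorem setIntegral_Ioc_le_of_norm_le_const {f : ℝ → ℝ} {r K : ℝ} (hr : 0 ≤ r)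
    (hf : ∀ t ∈ Set.Ioc 0 r, ‖f t‖ ≤ K) :
    ∫ t in Set.Ioc 0 r, f t ≤ K * r := by
  have h := norm_setIntegral_le_of_norm_le_const
    (measure_Ioc_lt_top (μ := volume) (a := 0) (b := r)) hf
  rw [Real.volume_real_Ioc_of_le hr, sub_zero] at h
  exact (le_abs_self _).trans h

theorem stmt12 (a : ℝ) (ha : 0 < a) :
    ∃ C : ℝ, 0 < C ∧ ∀ r R : ℝ, 0 < r → 0 < R →
      ∫ t in Set.Ioc (0 : ℝ) r, t ^ (-a / 2) * Real.exp (-R / t) ≤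
        C * r * Real.exp (-R / (2 * r)) / (R / 2) ^ (a / 2) := by
  have hb : 0 < a / 2 := by positivity
  refine ⟨(a / 2) ^ (a / 2) * Real.exp (-(a / 2)), by positivity, fun r R hr hR => ?_⟩
  calc ∫ t in Set.Ioc (0 : ℝ) r, t ^ (-a / 2) * Real.exp (-R / t)
      ≤ (a / 2) ^ (a / 2) * Real.exp (-(a / 2)) * Real.exp (-R / (2 * r)) / (R / 2) ^ (a / 2)
          * r := by
        refine setIntegral_Ioc_le_of_norm_le_const hr.le fun t ⟨ht, htr⟩ => ?_
        rw [Real.norm_of_nonneg (by positivity), neg_div]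
        exact Real.rpow_neg_mul_exp_neg_div_le hb hR ht htr
    _ = _ := by ring

end
end

section
/- Let d ≥ 3 be an integer and γ > 0. There exists a constant C > 0 such that for all R > 0 and all w ∈ ℝ^d with |w| ≥ 2R: ∫_{|z|>R} |w-z|^{2-d}·|z|^{-2-γ} dz ≤ C·R^{-γ}. -/
/-!
Split the exterior region according to whether `‖w - z‖ ≥ ‖z‖ / 2`. There the kernel is at most
`2 ^ (d - 2) ‖z‖ ^ (2 - d)`, and in polar coordinates `∫_{‖z‖ > R} ‖z‖ ^ (-d - γ) = σ R ^ (-γ) / γ`,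
with `σ` the area of the unit sphere. Otherwise `z` lies in the ball `B(w, ‖w‖)` and
`‖z‖ ≥ ‖w‖ / 2 ≥ R`, so the integrand is at most `(‖w‖ / 2) ^ (-2 - γ) ‖w - z‖ ^ (2 - d)`;
the kernel integrates to `σ ‖w‖ ^ 2 / 2` over that ball, giving at most `2 σ R ^ (-γ)`.
-/

open MeasureTheory Measure Set Metric
open scoped ENNReal

lemma pow_pred_mul_rpow {n : ℕ} (hn : 0 < n) {y : ℝ} (hy : 0 < y) (p : ℝ) :
    y ^ (n - 1) * y ^ p = y ^ ((n : ℝ) - 1 + p) := by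
  rw [Real.rpow_add hy, ← Nat.cast_pred hn, Real.rpow_natCast]

lemma rpow_norm_sub_mul_rpow_norm_le {F : Type*} [NormedAddCommGroup F] {p q : ℝ} (hp : p ≤ 0)
    (hq : q ≤ 0) (w : F) {z : F} (hz : z ≠ 0) :
    ‖w - z‖ ^ p * ‖z‖ ^ q ≤
      2 ^ (-p) * ‖z‖ ^ (p + q) +
        (ball w ‖w‖).indicator (fun z => (‖w‖ / 2) ^ q * ‖w - z‖ ^ p) z := by
  have hz0 : 0 < ‖z‖ := norm_pos_iff.2 hz
  rcases le_or_gt (‖z‖ / 2) ‖w - z‖ with hfar | hnear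
  · have hkernel : ‖w - z‖ ^ p ≤ 2 ^ (-p) * ‖z‖ ^ p :=
      calc ‖w - z‖ ^ p ≤ (‖z‖ / 2) ^ p := Real.rpow_le_rpow_of_nonpos (by positivity) hfar hp
        _ = 2 ^ (-p) * ‖z‖ ^ p := by
          rw [Real.div_rpow hz0.le zero_le_two, Real.rpow_neg zero_le_two, div_eq_inv_mul]
    calc ‖w - z‖ ^ p * ‖z‖ ^ q ≤ 2 ^ (-p) * ‖z‖ ^ p * ‖z‖ ^ q := by gcongr
      _ = 2 ^ (-p) * ‖z‖ ^ (p + q) := by rw [Real.rpow_add hz0, mul_assoc]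
      _ ≤ _ := le_add_of_nonneg_right (indicator_nonneg (fun _ _ => by positivity) _)
  · have h₁ := norm_sub_norm_le z w
    have h₂ := norm_sub_norm_le w z
    rw [norm_sub_rev] at h₁
    have hmem : z ∈ ball w ‖w‖ := by rw [mem_ball_iff_norm']; linarith
    have hw : ‖w‖ / 2 ≤ ‖z‖ := by linarith
    rw [indicator_of_mem hmem]
    calc ‖w - z‖ ^ p * ‖z‖ ^ q ≤ ‖w - z‖ ^ p * (‖w‖ / 2) ^ q :=
          mul_le_mul_of_nonneg_left (Real.rpow_le_rpow_of_nonpos (by linarith) hw hq)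
            (by positivity)
      _ ≤ _ := by rw [mul_comm]; exact le_add_of_nonneg_left (by positivity)

section AddHaar

variable {E : Type*} [NormedAddCommGroup E] [NormedSpace ℝ E] [MeasurableSpace E] [BorelSpace E]
  [Nontrivial E] [FiniteDimensional ℝ E] (μ : Measure E) [μ.IsAddHaarMeasure]

local notation "dim" => Module.finrank ℝ E

lemma lintegral_fun_norm_addHaar {f : ℝ → ℝ≥0∞} (hf : Measurable f) :
    ∫⁻ x, f ‖x‖ ∂μ = μ.toSphere univ * ∫⁻ y in Ioi 0, ENNReal.ofReal (y ^ (dim - 1)) * f y :=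
  calc
    ∫⁻ x, f ‖x‖ ∂μ = ∫⁻ x : ({0}ᶜ : Set E), f ‖(x : E)‖ ∂(μ.comap (↑)) := by
      rw [lintegral_subtype_comap (measurableSet_singleton 0).compl (fun x => f ‖x‖),
        restrict_compl_singleton]
    _ = ∫⁻ p, f p.2 ∂(μ.toSphere.prod (volumeIoiPow (dim - 1))) := by
      simpa using μ.measurePreserving_homeomorphUnitSphereProd.lintegral_comp
        (hf.comp (measurable_subtype_coe.comp measurable_snd))
    _ = μ.toSphere univ * ∫⁻ y, f y ∂(volumeIoiPow (dim - 1)) := by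
      rw [lintegral_prod (fun p : sphere (0 : E) 1 × Ioi (0 : ℝ) => f p.2)
        (hf.comp (measurable_subtype_coe.comp measurable_snd)).aemeasurable]
      simp [mul_comm]
    _ = _ := by
      rw [volumeIoiPow, lintegral_withDensity_eq_lintegral_mul _
        (measurable_subtype_coe.pow_const _).ennreal_ofReal (g := fun y : Ioi (0 : ℝ) => f y)
        (hf.comp measurable_subtype_coe),
        ← lintegral_subtype_comap measurableSet_Ioi (fun y => ENNReal.ofReal (y ^ (dim - 1)) * f y)]
      rfl

lemma setLIntegral_fun_norm_addHaar {s : Set ℝ} (hs : MeasurableSet s) {f : ℝ → ℝ≥0∞}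
    (hf : Measurable f) :
    ∫⁻ x in norm ⁻¹' s, f ‖x‖ ∂μ =
      μ.toSphere univ * ∫⁻ y in s ∩ Ioi 0, ENNReal.ofReal (y ^ (dim - 1)) * f y := by
  rw [← lintegral_indicator (measurable_norm hs), ← restrict_restrict hs,
    ← lintegral_indicator hs]
  simp only [indicator_mul_right]
  exact lintegral_fun_norm_addHaar μ (hf.indicator hs)

lemma setLIntegral_rpow_norm_exterior {R γ : ℝ} (hR : 0 < R) (hγ : 0 < γ) :
    ∫⁻ z in {z : E | R < ‖z‖}, ENNReal.ofReal (‖z‖ ^ (-(dim : ℝ) - γ)) ∂μ =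
      μ.toSphere univ * ENNReal.ofReal (R ^ (-γ) / γ) := by
  change ∫⁻ z in norm ⁻¹' Ioi R, _ ∂μ = _
  rw [setLIntegral_fun_norm_addHaar μ measurableSet_Ioi
    (f := fun y => ENNReal.ofReal (y ^ (-(dim : ℝ) - γ))) (by fun_prop), Ioi_inter_Ioi,
    max_eq_left hR.le]
  congr 1
  have hpow : ∀ y ∈ Ioi R, ENNReal.ofReal (y ^ (dim - 1)) * ENNReal.ofReal (y ^ (-(dim : ℝ) - γ)) =
      ENNReal.ofReal (y ^ (-1 - γ)) := fun y (hy : R < y) => by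
    rw [← ENNReal.ofReal_mul (pow_nonneg (hR.trans hy).le _),
      pow_pred_mul_rpow Module.finrank_pos (hR.trans hy),
      show (dim : ℝ) - 1 + (-dim - γ) = -1 - γ by ring]
  rw [setLIntegral_congr_fun measurableSet_Ioi hpow,
    ← ofReal_integral_eq_lintegral_ofReal (integrableOn_Ioi_rpow_of_lt (by linarith) hR)
      (ae_restrict_of_forall_mem measurableSet_Ioi fun y (hy : R < y) =>
        Real.rpow_nonneg (hR.trans hy).le _),
    integral_Ioi_rpow_of_lt (by linarith) hR]
  rw [show -1 - γ + 1 = -γ by ring, neg_div_neg_eq]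

lemma setLIntegral_rpow_norm_sub_ball (w : E) {r : ℝ} (hr : 0 ≤ r) :
    ∫⁻ z in ball w r, ENNReal.ofReal (‖w - z‖ ^ (2 - (dim : ℝ))) ∂μ =
      μ.toSphere univ * ENNReal.ofReal (r ^ 2 / 2) := by
  have hpre : (w - ·) ⁻¹' ball 0 r = ball w r := by ext; simp [dist_eq_norm, norm_sub_rev]
  have hball : ball (0 : E) r = norm ⁻¹' Iio r := by ext; simp
  rw [← hpre, (measurePreserving_sub_left μ w).setLIntegral_comp_preimage_emb
      (MeasurableEquiv.subLeft w).measurableEmbedding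
      (fun z => ENNReal.ofReal (‖z‖ ^ (2 - (dim : ℝ)))),
    hball, setLIntegral_fun_norm_addHaar μ measurableSet_Iio
    (f := fun y => ENNReal.ofReal (y ^ (2 - (dim : ℝ)))) (by fun_prop), Iio_inter_Ioi]
  congr 1
  have hpow : ∀ y ∈ Ioo 0 r, ENNReal.ofReal (y ^ (dim - 1)) * ENNReal.ofReal (y ^ (2 - (dim : ℝ))) =
      ENNReal.ofReal y := fun y hy => by
    rw [← ENNReal.ofReal_mul (pow_nonneg hy.1.le _), pow_pred_mul_rpow Module.finrank_pos hy.1,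
      show (dim : ℝ) - 1 + (2 - dim) = 1 by ring, Real.rpow_one]
  have hint : IntegrableOn (fun y : ℝ => y) (Ioo 0 r) :=
    continuous_id'.integrableOn_Icc.mono_set Ioo_subset_Icc_self
  rw [setLIntegral_congr_fun measurableSet_Ioo hpow, ← ofReal_integral_eq_lintegral_ofReal hint
      (ae_restrict_of_forall_mem measurableSet_Ioo fun y hy => hy.1.le),
    ← integral_Ioc_eq_integral_Ioo, ← intervalIntegral.integral_of_le hr, integral_id]
  simp

lemma setLIntegral_rpow_norm_sub_mul_rpow_norm_exterior_le (hdim : 2 ≤ dim) {γ R : ℝ}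
    (hγ : 0 < γ) (hR : 0 < R) (w : E) :
    ∫⁻ z in {z : E | R < ‖z‖}, ENNReal.ofReal (‖w - z‖ ^ (2 - (dim : ℝ)) * ‖z‖ ^ (-2 - γ)) ∂μ ≤
      ENNReal.ofReal (2 ^ ((dim : ℝ) - 2)) * (μ.toSphere univ * ENNReal.ofReal (R ^ (-γ) / γ)) +
        ENNReal.ofReal ((‖w‖ / 2) ^ (-2 - γ)) *
          (μ.toSphere univ * ENNReal.ofReal (‖w‖ ^ 2 / 2)) := by
  have hp : 2 - (dim : ℝ) ≤ 0 := by
    have : (2 : ℝ) ≤ dim := by exact_mod_cast hdim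
    linarith
  set c := (‖w‖ / 2) ^ (-2 - γ)
  have hpt : ∀ z ∈ {z : E | R < ‖z‖},
      ENNReal.ofReal (‖w - z‖ ^ (2 - (dim : ℝ)) * ‖z‖ ^ (-2 - γ)) ≤
        ENNReal.ofReal (2 ^ ((dim : ℝ) - 2)) * ENNReal.ofReal (‖z‖ ^ (-(dim : ℝ) - γ)) +
          (ball w ‖w‖).indicator
            (fun z => ENNReal.ofReal c * ENNReal.ofReal (‖w - z‖ ^ (2 - (dim : ℝ)))) z := by
    intro z (hz : R < ‖z‖)
    have hbound := rpow_norm_sub_mul_rpow_norm_le hp (by linarith : -2 - γ ≤ 0) w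
      (norm_pos_iff.1 (hR.trans hz))
    rw [neg_sub, show 2 - (dim : ℝ) + (-2 - γ) = -dim - γ by ring] at hbound
    refine (ENNReal.ofReal_le_ofReal hbound).trans (ENNReal.ofReal_add_le.trans ?_)
    refine add_le_add (ENNReal.ofReal_mul (by positivity)).le (le_of_eq ?_)
    by_cases hmem : z ∈ ball w ‖w‖
    · rw [indicator_of_mem hmem, indicator_of_mem hmem, ENNReal.ofReal_mul (by positivity)]
    · rw [indicator_of_notMem hmem, indicator_of_notMem hmem, ENNReal.ofReal_zero]
  calc _ ≤ ∫⁻ z in {z : E | R < ‖z‖},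
          (ENNReal.ofReal (2 ^ ((dim : ℝ) - 2)) * ENNReal.ofReal (‖z‖ ^ (-(dim : ℝ) - γ)) +
            (ball w ‖w‖).indicator
              (fun z => ENNReal.ofReal c * ENNReal.ofReal (‖w - z‖ ^ (2 - (dim : ℝ)))) z) ∂μ :=
        setLIntegral_mono (by fun_prop (disch := exact measurableSet_ball)) hpt
    _ ≤ ENNReal.ofReal (2 ^ ((dim : ℝ) - 2)) *
            ∫⁻ z in {z : E | R < ‖z‖}, ENNReal.ofReal (‖z‖ ^ (-(dim : ℝ) - γ)) ∂μ +
          ∫⁻ z, (ball w ‖w‖).indicator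
              (fun z => ENNReal.ofReal c * ENNReal.ofReal (‖w - z‖ ^ (2 - (dim : ℝ)))) z ∂μ := by
        rw [lintegral_add_left (by fun_prop), lintegral_const_mul _ (by fun_prop)]
        exact add_le_add le_rfl (setLIntegral_le_lintegral _ _)
    _ = _ := by
        rw [lintegral_indicator measurableSet_ball, lintegral_const_mul _ (by fun_prop),
          setLIntegral_rpow_norm_exterior μ hR hγ,
          setLIntegral_rpow_norm_sub_ball μ w (norm_nonneg w)]

lemma setIntegral_rpow_norm_sub_mul_rpow_norm_exterior_le (hdim : 2 ≤ dim) {γ R : ℝ}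
    (hγ : 0 < γ) (hR : 0 < R) {w : E} (hw : 2 * R ≤ ‖w‖) :
    ∫ z in {z : E | R < ‖z‖}, ‖w - z‖ ^ (2 - (dim : ℝ)) * ‖z‖ ^ (-2 - γ) ∂μ ≤
      μ.toSphere.real univ * (2 ^ ((dim : ℝ) - 2) / γ + 2) * R ^ (-γ) := by
  set σ := μ.toSphere.real univ
  have hσ : μ.toSphere univ = ENNReal.ofReal σ := (ofReal_measureReal (measure_ne_top _ _)).symm
  have hnear : (‖w‖ / 2) ^ (-2 - γ) * (‖w‖ ^ 2 / 2) ≤ 2 * R ^ (-γ) := by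
    have hρ : R ≤ ‖w‖ / 2 := by linarith
    calc (‖w‖ / 2) ^ (-2 - γ) * (‖w‖ ^ 2 / 2)
        = 2 * ((‖w‖ / 2) ^ (-2 - γ) * (‖w‖ / 2) ^ (2 : ℝ)) := by rw [Real.rpow_two]; ring
      _ = 2 * (‖w‖ / 2) ^ (-γ) := by
          rw [← Real.rpow_add (by linarith : (0 : ℝ) < ‖w‖ / 2)]; ring_nf
      _ ≤ 2 * R ^ (-γ) :=
          mul_le_mul_of_nonneg_left (Real.rpow_le_rpow_of_nonpos hR hρ (by linarith)) zero_le_two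
  rw [integral_eq_lintegral_of_nonneg_ae (ae_of_all _ fun z => by positivity)
    (by fun_prop : Measurable _).aestronglyMeasurable]
  refine ENNReal.toReal_le_of_le_ofReal (by positivity)
    ((setLIntegral_rpow_norm_sub_mul_rpow_norm_exterior_le μ hdim hγ hR w).trans ?_)
  rw [hσ, ← ENNReal.ofReal_mul (by positivity), ← ENNReal.ofReal_mul (by positivity),
    ← ENNReal.ofReal_mul (by positivity), ← ENNReal.ofReal_mul (by positivity),
    ← ENNReal.ofReal_add (by positivity) (by positivity)]
  refine ENNReal.ofReal_le_ofReal ?_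
  have hσ0 : 0 ≤ σ := measureReal_nonneg
  calc 2 ^ ((dim : ℝ) - 2) * (σ * (R ^ (-γ) / γ)) + (‖w‖ / 2) ^ (-2 - γ) * (σ * (‖w‖ ^ 2 / 2))
      = σ * (2 ^ ((dim : ℝ) - 2) / γ * R ^ (-γ) + (‖w‖ / 2) ^ (-2 - γ) * (‖w‖ ^ 2 / 2)) := by
        ring
    _ ≤ σ * (2 ^ ((dim : ℝ) - 2) / γ * R ^ (-γ) + 2 * R ^ (-γ)) := by gcongr
    _ = σ * (2 ^ ((dim : ℝ) - 2) / γ + 2) * R ^ (-γ) := by ring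

end AddHaar

theorem stmt13 (d : ℕ) (hd : 3 ≤ d) (γ : ℝ) (hγ : 0 < γ) :
    ∃ C : ℝ, 0 < C ∧ ∀ R : ℝ, 0 < R → ∀ w : EuclideanSpace ℝ (Fin d), 2 * R ≤ ‖w‖ →
      ∫ z in {z : EuclideanSpace ℝ (Fin d) | R < ‖z‖},
          ‖w - z‖ ^ ((2 : ℝ) - d) * ‖z‖ ^ (-2 - γ) ≤
        C * R ^ (-γ) := by
  have : Nontrivial (EuclideanSpace ℝ (Fin d)) := by
    have : Nonempty (Fin d) := ⟨⟨0, by omega⟩⟩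
    infer_instance
  have hdim := finrank_euclideanSpace_fin (𝕜 := ℝ) (n := d)
  have hσ : 0 < (volume : Measure (EuclideanSpace ℝ (Fin d))).toSphere.real univ :=
    ENNReal.toReal_pos (measure_univ_ne_zero.2 (toSphere_ne_zero _)) (measure_ne_top _ _)
  refine ⟨_, mul_pos hσ (by positivity : 0 < 2 ^ ((d : ℝ) - 2) / γ + 2), fun R hR w hw => ?_⟩
  simpa only [hdim] using
    setIntegral_rpow_norm_sub_mul_rpow_norm_exterior_le volume (by omega) hγ hR hw
end

section
/- Let γ > 0. There exists a constant C > 0 such that for all R ≥ 1, all t ≥ R², and all w ∈ ℝ² with |w| ≥ 2R: ∫₀^t ∫_{|z|>R} ψ_{2,R}(s,|w|)·ψ_{2,R}(s,|z|)·ψ_{2,R}(t,|z|)·|z|^{-2-γ} dz ds ≤ C·t·ψ_{2,R}(t,|w|)/R^γ. -/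
open MeasureTheory

noncomputable section

/-- `Log r := log(e - 1 + r)`. -/
def LLog (r : ℝ) : ℝ := Real.log (Real.exp 1 - 1 + r)

/-- `ψ_{2,R}(t,r) := min(1, (min(r-R,R)·Log((r-R)/R)) / (min(√t,R)·Log(√t/R)))`. -/
def psi2 (R t r : ℝ) : ℝ :=
  min 1 ((min (r - R) R * LLog ((r - R) / R)) /
    (min (Real.sqrt t) R * LLog (Real.sqrt t / R)))

/-!
Since `ψ_{2,R} ≤ 1`, the factors `ψ_{2,R}(s,|z|) ψ_{2,R}(t,|z|)` can be dropped, and by scaling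
the remaining weight integrates to `K / R^γ` with `K = ∫_{|z|>1} |z|^{-2-γ}`. In time, the
inequality `Log (x y) ≤ Log x + log y` (for `y ≥ 1`) gives
`ψ_{2,R}(s,r) ≤ ψ_{2,R}(t,r) (1 + log (t/s) / 2)` for `0 < s ≤ t`,
and `∫₀^t (1 + log (t/s) / 2) ds = 3t/2`.
-/

open Real Set Module

lemma LLog_one : LLog 1 = 1 := by simp [LLog]

lemma LLog_le_LLog {x y : ℝ} (hx : 0 ≤ x) (hxy : x ≤ y) : LLog x ≤ LLog y :=
  log_le_log (by linarith [exp_one_gt_two]) (by linarith)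

lemma LLog_nonneg {x : ℝ} (hx : 0 ≤ x) : 0 ≤ LLog x :=
  log_nonneg (by linarith [exp_one_gt_two])

lemma one_le_LLog {x : ℝ} (hx : 1 ≤ x) : 1 ≤ LLog x :=
  LLog_one ▸ LLog_le_LLog zero_le_one hx

lemma LLog_mul_le_add_log {x y : ℝ} (hx : 0 ≤ x) (hy : 1 ≤ y) :
    LLog (x * y) ≤ LLog x + log y := by
  have he : 0 < exp 1 - 1 := by linarith [exp_one_gt_two]
  rw [LLog, LLog, ← log_mul (by positivity) (by positivity)]
  -- `(e - 1 + x) y - (e - 1 + x y) = (e - 1) (y - 1) ≥ 0`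
  exact log_le_log (by positivity) (by nlinarith)

lemma LLog_le_LLog_max_one_mul {u v : ℝ} (hv : 0 < v) (hvu : v ≤ u) (hu : 1 ≤ u) :
    LLog u ≤ LLog (max 1 v) * (1 + log (u / v)) := by
  set m := max 1 v
  have hm : 1 ≤ m := le_max_left 1 v
  have hmu : m ≤ u := max_le hu hvu
  have hlog : log (u / m) ≤ log (u / v) :=
    log_le_log (by positivity) (div_le_div_of_nonneg_left (by positivity) hv (le_max_right 1 v))
  have hlog_nonneg : 0 ≤ log (u / v) := log_nonneg ((one_le_div hv).2 hvu)
  have hLm := one_le_LLog hm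
  calc LLog u = LLog (m * (u / m)) := by rw [mul_div_cancel₀ u (by positivity)]
    _ ≤ LLog m + log (u / m) :=
      LLog_mul_le_add_log (by positivity) ((one_le_div (by positivity)).2 hmu)
    _ ≤ LLog m * (1 + log (u / v)) := by nlinarith

lemma psi2_nonneg {R r : ℝ} (hR : 0 < R) (hr : R ≤ r) (t : ℝ) : 0 ≤ psi2 R t r := by
  have hnum := LLog_nonneg (div_nonneg (sub_nonneg.2 hr) hR.le)
  have hden := LLog_nonneg (div_nonneg (sqrt_nonneg t) hR.le)
  have : 0 ≤ min (r - R) R := le_min (sub_nonneg.2 hr) hR.le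
  have : 0 ≤ min (√t) R := le_min (sqrt_nonneg t) hR.le
  exact le_min zero_le_one (by positivity)

lemma psi2_mul_psi2_mul_psi2_mul_rpow_nonneg {R r x : ℝ} (hR : 0 < R) (hr : R ≤ r) (hx : R ≤ x)
    (s t q : ℝ) : 0 ≤ psi2 R s r * psi2 R s x * psi2 R t x * x ^ q := by
  have := psi2_nonneg hR hr s
  have := psi2_nonneg hR hx s
  have := psi2_nonneg hR hx t
  have : 0 ≤ x ^ q := rpow_nonneg (hR.le.trans hx) q
  positivity

lemma psi2_le_one (R t r : ℝ) : psi2 R t r ≤ 1 := min_le_left _ _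

lemma measurable_psi2 (R r : ℝ) : Measurable fun t => psi2 R t r := by
  unfold psi2 LLog
  fun_prop

lemma integrableOn_psi2 {R r : ℝ} (hR : 0 < R) (hr : R ≤ r) (a b : ℝ) :
    IntegrableOn (fun t => psi2 R t r) (Ioc a b) :=
  IntegrableOn.of_bound measure_Ioc_lt_top (measurable_psi2 R r).aestronglyMeasurable 1
    (ae_of_all _ fun t => by
      rw [norm_of_nonneg (psi2_nonneg hR hr t)]
      exact psi2_le_one R t r)

lemma psi2_eq_of_le_sqrt {R t r : ℝ} (hR : 0 < R) (ht : R ≤ √t) (hr : 2 * R ≤ r) :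
    psi2 R t r = min 1 (LLog ((r - R) / R) / LLog (√t / R)) := by
  rw [psi2, min_eq_right ht, min_eq_right (by linarith : R ≤ r - R),
    mul_div_mul_left _ _ hR.ne']

lemma psi2_le_min_one_div {R t r : ℝ} (hR : 0 < R) (hr : 2 * R ≤ r) :
    psi2 R t r ≤ min 1 (LLog ((r - R) / R) / LLog (max 1 (√t / R))) := by
  rcases le_or_gt R √t with ht | ht
  · rw [psi2_eq_of_le_sqrt hR ht hr, max_eq_right ((one_le_div hR).2 ht)]
  · have ha : 1 ≤ LLog ((r - R) / R) := one_le_LLog ((one_le_div hR).2 (by linarith))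
    rw [max_eq_left ((div_le_one hR).2 ht.le), LLog_one, div_one, min_eq_left ha]
    exact psi2_le_one R t r

lemma min_one_le_min_one_mul {x y c : ℝ} (hc : 1 ≤ c) (h : y ≤ x * c) :
    min 1 y ≤ min 1 x * c := by
  rw [min_mul_of_nonneg _ _ (by linarith), one_mul]
  exact min_le_min hc h

lemma psi2_le_psi2_mul_one_add_log {R s t r : ℝ} (hR : 0 < R) (ht : R ^ 2 ≤ t) (hr : 2 * R ≤ r)
    (hs : 0 < s) (hst : s ≤ t) :
    psi2 R s r ≤ psi2 R t r * (1 + log (t / s) / 2) := by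
  have hRt : R ≤ √t := le_sqrt_of_sq_le ht
  set a := LLog ((r - R) / R)
  have ha : 1 ≤ a := one_le_LLog ((one_le_div hR).2 (by linarith))
  have hu : 1 ≤ √t / R := (one_le_div hR).2 hRt
  have huv : √t / R / (√s / R) = √(t / s) := by
    rw [div_div_div_cancel_right₀ hR.ne', sqrt_div' t hs.le]
  have hkey := LLog_le_LLog_max_one_mul (u := √t / R) (v := √s / R) (by positivity)
    (by gcongr) hu
  rw [huv, log_sqrt (div_nonneg (by linarith) hs.le)] at hkey
  have hLm := one_le_LLog (le_max_left 1 (√s / R))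
  have hLu := one_le_LLog hu
  have hc : 0 ≤ log (t / s) := log_nonneg ((one_le_div hs).2 hst)
  rw [psi2_eq_of_le_sqrt hR hRt hr]
  refine (psi2_le_min_one_div hR hr).trans (min_one_le_min_one_mul (by linarith) ?_)
  rw [div_mul_eq_mul_div, div_le_div_iff₀ (by linarith) (by linarith), mul_assoc]
  exact mul_le_mul_of_nonneg_left (by linarith) (by linarith)

lemma integral_Ioc_log_div {t : ℝ} (ht : 0 < t) : ∫ s in Ioc 0 t, log (t / s) = t := by
  rw [setIntegral_congr_fun measurableSet_Ioc fun s hs => log_div ht.ne' hs.1.ne',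
    ← intervalIntegral.integral_of_le ht.le,
    intervalIntegral.integral_sub intervalIntegrable_const intervalIntegral.intervalIntegrable_log',
    intervalIntegral.integral_const, integral_log]
  simp

lemma integrableOn_log_div {t : ℝ} (ht : 0 < t) :
    IntegrableOn (fun s => log (t / s)) (Ioc 0 t) := by
  refine IntegrableOn.congr_fun ?_ (fun s hs => (log_div ht.ne' hs.1.ne').symm) measurableSet_Ioc
  exact (intervalIntegrable_iff_integrableOn_Ioc_of_le ht.le).1
    (intervalIntegrable_const.sub intervalIntegral.intervalIntegrable_log')

lemma integral_psi2_le {R t r : ℝ} (hR : 0 < R) (ht : R ^ 2 ≤ t) (hr : 2 * R ≤ r) :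
    ∫ s in Ioc 0 t, psi2 R s r ≤ 3 / 2 * t * psi2 R t r := by
  have ht0 : 0 < t := (by positivity : 0 < R ^ 2).trans_le ht
  have hone : IntegrableOn (fun _ => (1 : ℝ)) (Ioc 0 t) := integrableOn_const measure_Ioc_lt_top.ne
  have hlog : IntegrableOn (fun s => log (t / s) / 2) (Ioc 0 t) :=
    (integrableOn_log_div ht0).div_const 2
  calc ∫ s in Ioc 0 t, psi2 R s r
      ≤ ∫ s in Ioc 0 t, psi2 R t r * (1 + log (t / s) / 2) :=
        setIntegral_mono_on (integrableOn_psi2 hR (by linarith) 0 t) ((hone.add hlog).const_mul _)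
          measurableSet_Ioc fun s hs => psi2_le_psi2_mul_one_add_log hR ht hr hs.1 hs.2
    _ = 3 / 2 * t * psi2 R t r := by
      rw [integral_const_mul, integral_add hone hlog, integral_div, integral_Ioc_log_div ht0,
        setIntegral_const, volume_real_Ioc_of_le ht0.le, smul_eq_mul]
      ring

section Radial

open scoped Pointwise

variable {E : Type*} [NormedAddCommGroup E] [MeasurableSpace E] [BorelSpace E]

lemma measurableSet_lt_norm (R : ℝ) : MeasurableSet {x : E | R < ‖x‖} :=
  measurableSet_lt measurable_const measurable_norm

variable [NormedSpace ℝ E] [FiniteDimensional ℝ E] (μ : Measure E) [μ.IsAddHaarMeasure]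

lemma integrableOn_norm_rpow {q R : ℝ} (hq : q < -(finrank ℝ E : ℝ)) (hR : 0 < R) :
    IntegrableOn (fun x : E => ‖x‖ ^ q) {x | R < ‖x‖} μ := by
  have hint : Integrable (fun x : E => (1 + R⁻¹) ^ (-q) * (1 + ‖x‖) ^ q) μ := by
    simpa using (integrable_one_add_norm (μ := μ) (r := -q) (by linarith)).const_mul
      ((1 + R⁻¹) ^ (-q))
  refine hint.integrableOn.mono' (measurable_norm.pow_const q).aestronglyMeasurable
    ((ae_restrict_iff' (measurableSet_lt_norm R)).2 (ae_of_all _ fun x (hx : R < ‖x‖) => ?_))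
  have hx0 : 0 < ‖x‖ := hR.trans hx
  have hle : 1 + ‖x‖ ≤ (1 + R⁻¹) * ‖x‖ := by
    rw [add_mul, one_mul, add_comm, inv_mul_eq_div, ← sub_le_sub_iff_right ‖x‖]
    simpa using (one_lt_div hR).2 hx |>.le
  have hq0 : q ≤ 0 := by linarith [Nat.cast_nonneg (α := ℝ) (finrank ℝ E)]
  have := rpow_le_rpow_of_nonpos (by positivity) hle hq0
  rw [mul_rpow (by positivity) hx0.le] at this
  rw [norm_of_nonneg (by positivity), rpow_neg (by positivity)]
  rwa [le_inv_mul_iff₀ (by positivity)]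

lemma setIntegral_norm_rpow_gt (q : ℝ) {R : ℝ} (hR : 0 < R) :
    ∫ x in {x | R < ‖x‖}, ‖x‖ ^ q ∂μ =
      R ^ (q + finrank ℝ E) * ∫ x in {x | 1 < ‖x‖}, ‖x‖ ^ q ∂μ := by
  have hset : R • {x : E | 1 < ‖x‖} = {x | R < ‖x‖} := by
    ext x
    simp [mem_smul_set_iff_inv_smul_mem₀ hR.ne', norm_smul, abs_of_pos hR, lt_inv_mul_iff₀ hR]
  have hscale := Measure.setIntegral_comp_smul_of_pos μ (fun x : E => ‖x‖ ^ q) {x | 1 < ‖x‖} hR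
  simp only [norm_smul, norm_of_nonneg hR.le, mul_rpow hR.le (norm_nonneg _), hset,
    integral_const_mul, smul_eq_mul] at hscale
  rw [rpow_add hR, rpow_natCast, mul_comm (R ^ q), mul_assoc, hscale,
    mul_inv_cancel_left₀ (by positivity)]

lemma setIntegral_psi2_mul_le {R s t r q : ℝ} (hR : 0 < R) (hr : R ≤ r)
    (hq : q < -(finrank ℝ E : ℝ)) :
    ∫ x in {x | R < ‖x‖}, psi2 R s r * psi2 R s ‖x‖ * psi2 R t ‖x‖ * ‖x‖ ^ q ∂μ ≤
      psi2 R s r * ∫ x in {x | R < ‖x‖}, ‖x‖ ^ q ∂μ := by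
  rw [← integral_const_mul]
  refine integral_mono_of_nonneg ?_ ((integrableOn_norm_rpow μ hq hR).const_mul _)
    ((ae_restrict_iff' (measurableSet_lt_norm R)).2 (ae_of_all _ fun x (hx : R < ‖x‖) => ?_))
  · exact (ae_restrict_iff' (measurableSet_lt_norm R)).2 (ae_of_all _ fun x (hx : R < ‖x‖) =>
      psi2_mul_psi2_mul_psi2_mul_rpow_nonneg hR hr hx.le s t q)
  · have hψ := mul_le_one₀ (psi2_le_one R s ‖x‖) (psi2_nonneg hR hx.le t) (psi2_le_one R t ‖x‖)
    have := psi2_nonneg hR hr s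
    calc psi2 R s r * psi2 R s ‖x‖ * psi2 R t ‖x‖ * ‖x‖ ^ q
        = psi2 R s r * ‖x‖ ^ q * (psi2 R s ‖x‖ * psi2 R t ‖x‖) := by ring
      _ ≤ psi2 R s r * ‖x‖ ^ q := mul_le_of_le_one_right (by positivity) hψ

end Radial

theorem stmt14 (γ : ℝ) (hγ : 0 < γ) :
    ∃ C : ℝ, 0 < C ∧ ∀ R : ℝ, 1 ≤ R → ∀ t : ℝ, R ^ 2 ≤ t →
      ∀ w : EuclideanSpace ℝ (Fin 2), 2 * R ≤ ‖w‖ →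
        ∫ s in Set.Ioc (0 : ℝ) t, ∫ z in {z : EuclideanSpace ℝ (Fin 2) | R < ‖z‖},
            psi2 R s ‖w‖ * psi2 R s ‖z‖ * psi2 R t ‖z‖ * ‖z‖ ^ (-2 - γ) ≤
          C * t * psi2 R t ‖w‖ / R ^ γ := by
  have hq : -2 - γ < -(finrank ℝ (EuclideanSpace ℝ (Fin 2)) : ℝ) := by
    rw [finrank_euclideanSpace_fin]; push_cast; linarith
  obtain ⟨K, hK, hKR⟩ : ∃ K : ℝ, 0 ≤ K ∧ ∀ R : ℝ, 0 < R →
      ∫ z in {z : EuclideanSpace ℝ (Fin 2) | R < ‖z‖}, ‖z‖ ^ (-2 - γ) = K / R ^ γ := by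
    refine ⟨∫ z in {z : EuclideanSpace ℝ (Fin 2) | 1 < ‖z‖}, ‖z‖ ^ (-2 - γ),
      setIntegral_nonneg (measurableSet_lt_norm 1) fun z _ => by positivity,
      fun R hR => ?_⟩
    rw [setIntegral_norm_rpow_gt volume _ hR, finrank_euclideanSpace_fin,
      show -2 - γ + ((2 : ℕ) : ℝ) = -γ by push_cast; ring, rpow_neg hR.le, inv_mul_eq_div]
  refine ⟨3 / 2 * K + 1, by positivity, fun R hR t ht w hw => ?_⟩
  have hR0 : 0 < R := by linarith
  have hwR : R ≤ ‖w‖ := by linarith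
  have hψ := psi2_nonneg hR0 hwR t
  calc _ ≤ ∫ s in Ioc 0 t, psi2 R s ‖w‖ * (K / R ^ γ) := by
        refine integral_mono_of_nonneg ?_ ((integrableOn_psi2 hR0 hwR 0 t).mul_const _)
          (ae_of_all _ fun s => hKR R hR0 ▸ setIntegral_psi2_mul_le volume hR0 hwR hq)
        exact ae_of_all _ fun s => setIntegral_nonneg (measurableSet_lt_norm R) fun z hz =>
          psi2_mul_psi2_mul_psi2_mul_rpow_nonneg hR0 hwR (le_of_lt hz) s t _
    _ = (∫ s in Ioc 0 t, psi2 R s ‖w‖) * (K / R ^ γ) := integral_mul_const _ _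
    _ ≤ 3 / 2 * t * psi2 R t ‖w‖ * (K / R ^ γ) :=
        mul_le_mul_of_nonneg_right (integral_psi2_le hR0 ht hw) (by positivity)
    _ ≤ (3 / 2 * K + 1) * t * psi2 R t ‖w‖ / R ^ γ := by
        have htψ : 0 ≤ t * psi2 R t ‖w‖ := mul_nonneg (by nlinarith) hψ
        rw [mul_div_assoc', div_le_div_iff_of_pos_right (by positivity)]
        nlinarith

end
end
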